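/- For n ≥ 1 let Y_n := {w ∈ X_n : cdes(w⁻¹) ≤ 2}, and define τ_n : Y_n → 𝔅_{n+1} by τ_n(w) := 1 w'_1 w'_2 ⋯ w'_n (window notation), where w'_i := w_i + 1 if w_i > 0 and w'_i := w_i − 1 if w_i < 0. Then τ_n(Y_n) ⊆ Y_{n+1}, and τ_n is a poset embedding: for all u, w ∈ Y_n, u ≤ w in X_n if and only if τ_n(u) ≤ τ_n(w) in X_{n+1}. -/

import Mathlib

open scoped Classical

/-- A signed permutation of length `n`: a permutation `w` of `ℤ` with
`w(-i) = -w(i)` that fixes every integer of absolute value greater than `n`. -/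
def IsSignedPerm (n : ℕ) (w : Equiv.Perm ℤ) : Prop :=
  (∀ i : ℤ, w (-i) = - w i) ∧ ∀ i : ℤ, (n : ℤ) < |i| → w i = i

/-- Membership in `X_n := {w ∈ 𝔅_n : w⁻¹(1) > 0}`. -/
def InXn (n : ℕ) (w : Equiv.Perm ℤ) : Prop :=
  IsSignedPerm n w ∧ 0 < w.symm 1

/-- The type B descent number `des_B(w) = #{i ∈ {0,…,n-1} : w_i > w_{i+1}}`,
with the convention `w_0 = 0` (automatic, since a signed permutation fixes `0`). -/
noncomputable def desB (n : ℕ) (w : Equiv.Perm ℤ) : ℕ :=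
  ((Finset.range n).filter fun i => w ((i : ℤ) + 1) < w (i : ℤ)).card

/-- The flag-excedance `fexc(w) = 2·#{i : w_i > i} + #{i : w_i < 0}`. -/
noncomputable def fexc (n : ℕ) (w : Equiv.Perm ℤ) : ℕ :=
  2 * ((Finset.Icc (1 : ℤ) (n : ℤ)).filter fun i => i < w i).card
    + ((Finset.Icc (1 : ℤ) (n : ℤ)).filter fun i => w i < 0).card

/-- The cyclic successor on `{-n,…,-1,1,…,n}` (with `(-1)⁺ = 1` and `n⁺ = -n`). -/
def csucc (n : ℕ) (i : ℤ) : ℤ :=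
  if i = -1 then 1 else if i = (n : ℤ) then -(n : ℤ) else i + 1

/-- The circular descent set `CDes(w) = {i ∈ {-n,…,-1,1,…,n} : w(i) > w(i⁺)}`. -/
noncomputable def cdesSet (n : ℕ) (w : Equiv.Perm ℤ) : Finset ℤ :=
  (Finset.Icc (-(n : ℤ)) (n : ℤ)).filter fun i => i ≠ 0 ∧ w (csucc n i) < w i

/-- The circular descent number `cdes(w) = |CDes(w)|`. -/
noncomputable def cdes (n : ℕ) (w : Equiv.Perm ℤ) : ℕ := (cdesSet n w).card

/-- `a ≪ b`: there is a nonzero integer strictly between `a` and `b`. -/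
def Lll (a b : ℤ) : Prop := ∃ c : ℤ, c ≠ 0 ∧ a < c ∧ c < b

/-- The big ascent number `basc(w) = |BAsc(w)|`, where `BAsc(w) ⊆ {-1,1,…,n}`:
`-1 ∈ BAsc(w)` iff `w_1 ≥ 2`; for `1 ≤ i ≤ n-1`, `i ∈ BAsc(w)` iff `w_i ≪ w_{i+1}`;
and `n ∈ BAsc(w)` iff `w_n ≤ -2`. -/
noncomputable def basc (n : ℕ) (w : Equiv.Perm ℤ) : ℕ :=
  ((insert (-1 : ℤ) (Finset.Icc (1 : ℤ) (n : ℤ))).filter fun i =>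
    if i = -1 then 2 ≤ w 1
    else if i = (n : ℤ) then w (n : ℤ) ≤ -2
    else Lll (w i) (w (i + 1))).card

/-- `L'_{n,k}(r)`: the number of half-integer points in the `r`-th dilate of the
half-open type C hypersimplex `Δ'_{C_n,k}`, in the `y`-coordinates. -/
noncomputable def Lp (n k r : ℕ) : ℕ :=
  if k = 1 then
    Set.ncard {y : Fin n → ℤ |
      (∀ j, 0 ≤ y j ∧ y j ≤ 2 * (r : ℤ)) ∧ (∀ j : Fin n, (j : ℕ) = 0 → y j ≤ (r : ℤ)) ∧
      0 ≤ ∑ j, y j ∧ ∑ j, y j ≤ (r : ℤ)}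
  else
    Set.ncard {y : Fin n → ℤ |
      (∀ j, 0 ≤ y j ∧ y j ≤ 2 * (r : ℤ)) ∧ (∀ j : Fin n, (j : ℕ) = 0 → y j ≤ (r : ℤ)) ∧
      ((k : ℤ) - 1) * r < ∑ j, y j ∧ ∑ j, y j ≤ (k : ℤ) * r}

/-- `L_{n,k}(r)`: the number of half-integer points in the `r`-th dilate of the
closed type C hypersimplex `Δ_{C_n,k}`, in the `y`-coordinates. -/
noncomputable def Lc (n k r : ℕ) : ℕ :=
  Set.ncard {y : Fin n → ℤ |
    (∀ j, 0 ≤ y j ∧ y j ≤ 2 * (r : ℤ)) ∧ (∀ j : Fin n, (j : ℕ) = 0 → y j ≤ (r : ℤ)) ∧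
    ((k : ℤ) - 1) * r ≤ ∑ j, y j ∧ ∑ j, y j ≤ (k : ℤ) * r}

/-- `ψ_{n,k} = #{w ∈ X_n : basc(w) = k}`. -/
noncomputable def psiN (n k : ℕ) : ℕ :=
  {w : Equiv.Perm ℤ | InXn n w ∧ basc n w = k}.ncard

/-- `ψ_{n,k}` with an integer index (`0` for negative `k`). -/
noncomputable def psiZ (n : ℕ) (k : ℤ) : ℕ :=
  {w : Equiv.Perm ℤ | InXn n w ∧ (basc n w : ℤ) = k}.ncard

/-- `Ψ_{C_n}(t) = Σ_k ψ_{n,k} t^k ∈ ℤ[t]`. -/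
noncomputable def PsiC (n : ℕ) : Polynomial ℤ :=
  ∑ᶠ k : ℕ, (psiN n k : Polynomial ℤ) * Polynomial.X ^ k

/-- `Ψ_{C_n}(t)` with rational coefficients. -/
noncomputable def PsiCQ (n : ℕ) : Polynomial ℚ :=
  ∑ᶠ k : ℕ, (psiN n k : Polynomial ℚ) * Polynomial.X ^ k

/-- The descent number of a permutation of `{1,…,m}`. -/
noncomputable def desA (m : ℕ) (σ : Equiv.Perm (Fin m)) : ℕ :=
  (Finset.univ.filter fun i : Fin m =>
    ∃ h : (i : ℕ) + 1 < m, σ ⟨(i : ℕ) + 1, h⟩ < σ i).card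

/-- The classical (type A) Eulerian polynomial `E_m^A(t) = Σ_{σ ∈ S_m} t^{des σ}`. -/
noncomputable def EulerianA (m : ℕ) : Polynomial ℚ :=
  ∑ σ : Equiv.Perm (Fin m), Polynomial.X ^ desA m σ

/-- The relation `u ⇀ w` on `X_n`. -/
def covRel (n : ℕ) (u w : Equiv.Perm ℤ) : Prop :=
  InXn n u ∧ InXn n w ∧
    ((2 ≤ w 1 ∧ u = w * Equiv.swap (1 : ℤ) (-1)) ∨
     (∃ i : ℤ, 1 ≤ i ∧ i ≤ (n : ℤ) - 1 ∧ Lll (w i) (w (i + 1)) ∧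
        u = w * (Equiv.swap i (i + 1) * Equiv.swap (-i) (-(i + 1)))) ∨
     (w (n : ℤ) ≤ -2 ∧ u = w * Equiv.swap (n : ℤ) (-(n : ℤ))))

/-- The `i`-th coordinate (`1 ≤ i ≤ n`) of the vertex `v^j(w)` (`1 ≤ j ≤ n+1`):
`v^{n+1}_i(w) = #({1,…,i-1} ∩ CDes(w⁻¹))` and `v^j = v^{j+1} + ½ e_{w_j}`. -/
noncomputable def vcoord (n : ℕ) (w : Equiv.Perm ℤ) (j : ℕ) (i : ℕ) : ℚ :=
  ((Finset.Icc (1 : ℤ) ((i : ℤ) - 1) ∩ cdesSet n w.symm).card : ℚ)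
    + (1 / 2) * ∑ m ∈ Finset.Icc (j : ℤ) (n : ℤ),
        (if w m = (i : ℤ) then (1 : ℚ) else if w m = -(i : ℤ) then -1 else 0)

/-- `u` is the image `τ_n(w)`: in window notation `u = 1 w'_1 ⋯ w'_n`, where
`w'_i = w_i + 1` if `w_i > 0` and `w'_i = w_i - 1` if `w_i < 0`. -/
def isTau (n : ℕ) (w u : Equiv.Perm ℤ) : Prop :=
  u 1 = 1 ∧ ∀ i : ℤ, 1 ≤ i → i ≤ (n : ℤ) →
    u (i + 1) = if 0 < w i then w i + 1 else w i - 1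

/-!
Write `v = w⁻¹`. For `w ∈ X_n` the circular descents of `v` at `1 ≤ i < n` and at `-i-1` come
in pairs, `-1` is never one and `n` is one iff `vₙ > 0`, so `cdes v = 2 des(v₁ ⋯ vₙ) + [vₙ > 0]`;
hence `w ∈ Y_n` exactly when the window of `v` is an increasing run of `k` positive entries
followed by an increasing run of negative ones.
On such elements `w₁ ≤ w₂` holds iff `k₂ ≤ k₁` and `v₁ i ≤ v₂ i` for `i ≤ k₂`.

Necessity: for `1 ≤ i, j ≤ n` the number of circular descents of the cyclic word
`v(-j) ⋯ v(-1) v(1) ⋯ v(i)` can only grow along a step `⇀` of `X_n`. On `Y_n` these numbers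
recover `k`, and, by counting the positions `x` with `|vₓ| < v i`, the inequality `v₁ i ≤ v₂ i`.
Sufficiency: raise entries of the positive run by one (steps (ii), exchanging `m` with the
entry `-(m+1)` of the negative run) and negate a final entry `n` (step (iii)).

Finally `τ_n(w)⁻¹` has window `1, v₁', …, vₙ'`, a two-run with parameter `k + 1`, and the
criterion above reads the same for `w₁, w₂` and for `τ_n(w₁), τ_n(w₂)`.
-/

open Finset

/-! ### Signed permutations -/

namespace IsSignedPerm

variable {n : ℕ} {w w₁ w₂ t : Equiv.Perm ℤ}

lemma map_zero (h : IsSignedPerm n w) : w 0 = 0 := by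
  have h0 := h.1 0
  rw [neg_zero] at h0
  omega

lemma symm (h : IsSignedPerm n w) : IsSignedPerm n w.symm :=
  ⟨fun i => w.injective (by rw [Equiv.apply_symm_apply, h.1, Equiv.apply_symm_apply]),
    fun i hi => w.symm_apply_eq.2 (h.2 i hi).symm⟩

lemma map_ne_zero (h : IsSignedPerm n w) {i : ℤ} (hi : i ≠ 0) : w i ≠ 0 :=
  fun h0 => hi (w.injective (by rw [h0, h.map_zero]))

lemma map_mem_Icc (h : IsSignedPerm n w) {i : ℤ} (hi : i ∈ Set.Icc (-(n : ℤ)) n) :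
    w i ∈ Set.Icc (-(n : ℤ)) n := by
  by_contra hout
  have hfix := h.2 (w i) (by rw [Set.mem_Icc] at hout; rw [lt_abs]; omega)
  rw [w.injective hfix] at hout
  exact hout hi

lemma eq_neg_of_map_eq_neg (h : IsSignedPerm n w) {i j : ℤ} (hij : w i = -w j) : i = -j :=
  w.injective (by rw [h.1, hij])

lemma map_ne_neg_map (h : IsSignedPerm n w) {x y : ℤ} (hx : 1 ≤ x) (hy : 1 ≤ y) :
    w x ≠ -w y :=
  fun he => by have := h.eq_neg_of_map_eq_neg he; omega

lemma map_eq_iff (h : IsSignedPerm n w) {p c : ℤ} (hp : w p = c) (x : ℤ) :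
    (w x = c ↔ x = p) ∧ (w x = -c ↔ x = -p) :=
  ⟨⟨fun hx => w.injective (hx.trans hp.symm), fun hx => hx ▸ hp⟩,
    ⟨fun hx => h.eq_neg_of_map_eq_neg (hx.trans (congrArg Neg.neg hp).symm),
      fun hx => by rw [hx, h.1, hp]⟩⟩

lemma abs_map_abs (h : IsSignedPerm n w) (x : ℤ) :
    |w (|x|)| = |w x| := by
  rcases abs_cases x with ⟨e, -⟩ | ⟨e, -⟩ <;> simp [e, h.1]

lemma card_filter_abs_lt (h : IsSignedPerm n w) {a : ℤ}
    (ha : 1 ≤ a) (han : a ≤ n + 1) :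
    (#((Icc 1 (n : ℤ)).filter fun x => -a < w x ∧ w x < a) : ℤ) = a - 1 := by
  have hbound : ∀ {f : Equiv.Perm ℤ}, IsSignedPerm n f → ∀ x : ℤ, 1 ≤ x → x ≤ n →
      1 ≤ |f x| ∧ |f x| ≤ n := fun hf x hx hxn =>
    ⟨Int.one_le_abs (hf.map_ne_zero (by omega)),
      abs_le.2 (Set.mem_Icc.1 (hf.map_mem_Icc ⟨by omega, hxn⟩))⟩
  have hcard : #((Icc 1 (n : ℤ)).filter fun x => -a < w x ∧ w x < a) = #(Icc 1 (a - 1)) := by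
    refine card_nbij' (fun x => |w x|) (fun y => |w.symm y|) ?_ ?_ ?_ ?_
    · intro x hx
      simp only [mem_coe, mem_filter, mem_Icc] at hx ⊢
      have := hbound h x hx.1.1 hx.1.2
      have := abs_lt.2 hx.2
      omega
    · intro y hy
      simp only [mem_coe, mem_filter, mem_Icc] at hy ⊢
      have := hbound h.symm y hy.1 (by omega)
      have e : |w (|w.symm y|)| = y := by
        rw [h.abs_map_abs, w.apply_symm_apply, abs_of_pos (by omega)]
      exact ⟨⟨by omega, by omega⟩, abs_lt.1 (by omega)⟩
    · intro x hx
      simp only [mem_coe, mem_filter, mem_Icc] at hx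
      beta_reduce
      rw [h.symm.abs_map_abs, w.symm_apply_apply, abs_of_pos (by omega)]
    · intro y hy
      simp only [mem_coe, mem_Icc] at hy
      beta_reduce
      rw [h.abs_map_abs, w.apply_symm_apply, abs_of_pos (by omega)]
  rw [hcard, Int.card_Icc]
  omega

lemma mul (hw : IsSignedPerm n w) (ht : IsSignedPerm n t) : IsSignedPerm n (w * t) :=
  ⟨fun i => by simp only [Equiv.Perm.mul_apply, ht.1, hw.1],
    fun i hi => by simp only [Equiv.Perm.mul_apply, ht.2 i hi, hw.2 i hi]⟩

lemma ext_of_window (h₁ : IsSignedPerm n w₁) (h₂ : IsSignedPerm n w₂)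
    (h : ∀ i, 1 ≤ i → i ≤ (n : ℤ) → w₁ i = w₂ i) : w₁ = w₂ := by
  ext x
  by_cases hx : (n : ℤ) < |x|
  · rw [h₁.2 x hx, h₂.2 x hx]
  rw [not_lt, abs_le] at hx
  rcases lt_trichotomy x 0 with hneg | rfl | hpos
  · rw [← neg_neg x, h₁.1, h₂.1, h (-x) (by omega) (by omega)]
  · rw [h₁.map_zero, h₂.map_zero]
  · exact h x hpos hx.2

end IsSignedPerm

/-! ### Circular descents of `w⁻¹` and the set `Y_n` -/

noncomputable def desBefore (v : ℤ → ℤ) (q : ℤ) : ℤ :=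
  ∑ j ∈ Icc 1 (q - 1), if v (j + 1) < v j then 1 else 0

lemma csucc_of_ne {n : ℕ} {i : ℤ} (h₁ : i ≠ -1) (h₂ : i ≠ n) : csucc n i = i + 1 := by
  simp [csucc, h₁, h₂]

lemma csucc_neg_one (n : ℕ) : csucc n (-1) = 1 := by
  simp [csucc]

lemma csucc_self {n : ℕ} (hn : 1 ≤ n) : csucc n n = -n := by
  simp [csucc, show (n : ℤ) ≠ -1 by omega]

lemma sum_Icc_eq_add {M : Type*} [AddCommMonoid M] (f : ℤ → M) {a b c : ℤ}
    (hab : a ≤ b + 1) (hbc : b ≤ c) :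
    ∑ i ∈ Icc a c, f i = ∑ i ∈ Icc a b, f i + ∑ i ∈ Icc (b + 1) c, f i := by
  rw [← sum_union (disjoint_left.2 fun x hx hx' => by simp only [mem_Icc] at hx hx'; omega)]
  congr 1
  ext x
  simp only [mem_union, mem_Icc]
  omega

theorem cdes_eq {n : ℕ} {v : Equiv.Perm ℤ} (hn : 1 ≤ n) (h : IsSignedPerm n v) (h1 : 0 < v 1) :
    (cdes n v : ℤ) = 2 * desBefore v n + if 0 < v n then 1 else 0 := by
  set d : ℤ → ℤ := fun i => if i ≠ 0 ∧ v (csucc n i) < v i then 1 else 0 with hd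
  have hcdes : (cdes n v : ℤ) = ∑ i ∈ Icc (-(n : ℤ)) n, d i := by
    simp only [cdes, cdesSet, hd, sum_boole]
  have hpos : ∑ i ∈ Icc 1 ((n : ℤ) - 1), d i = desBefore v n :=
    sum_congr rfl fun j hj => by
      rw [mem_Icc] at hj
      simp only [hd, csucc_of_ne (n := n) (show j ≠ -1 by omega) (show j ≠ n by omega)]
      exact if_congr ⟨fun h => h.2, fun h => ⟨by omega, h⟩⟩ rfl rfl
  -- the reflection `i ↦ -i - 1` matches the descents at negative positions with the positive ones
  have hneg : ∑ i ∈ Icc (-(n : ℤ)) (-2), d i = desBefore v n := by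
    refine sum_nbij' (fun i => -i - 1) (fun j => -j - 1) ?_ ?_ ?_ ?_ ?_
    · intro i hi; simp only [mem_Icc] at hi ⊢; omega
    · intro j hj; simp only [mem_Icc] at hj ⊢; omega
    · intro i _; ring
    · intro j _; ring
    · intro i hi
      rw [mem_Icc] at hi
      have e : v (-i - 1) = -v (i + 1) := by rw [← h.1]; ring_nf
      simp only [hd, csucc_of_ne (n := n) (show i ≠ -1 by omega) (show i ≠ n by omega),
        show -i - 1 + 1 = -i by ring, h.1 i, e]
      exact if_congr ⟨fun h => by omega, fun h => ⟨by omega, by omega⟩⟩ rfl rfl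
  have hm1 : d (-1) = 0 := by
    have : v (-1) = -v 1 := h.1 1
    simp only [hd, csucc_neg_one, this]
    rw [if_neg (by omega)]
  have h0 : d 0 = 0 := by simp [hd]
  have htop : d n = if 0 < v n then 1 else 0 := by
    have hn0 : v n ≠ 0 := h.map_ne_zero (by omega)
    simp only [hd, csucc_self hn, h.1]
    exact if_congr ⟨fun h => by omega, fun h => ⟨by omega, by omega⟩⟩ rfl rfl
  rw [hcdes, sum_Icc_eq_add d (b := -2) (by omega) (by omega),
    sum_Icc_eq_add d (a := -2 + 1) (b := 0) (by omega) (by omega),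
    sum_Icc_eq_add d (a := 0 + 1) (b := (n : ℤ) - 1) (by omega) (by omega),
    show (-2 : ℤ) + 1 = -1 by norm_num, show (0 : ℤ) + 1 = 1 by norm_num,
    show (n : ℤ) - 1 + 1 = n by ring, Icc_self, sum_singleton,
    show Icc (-1 : ℤ) 0 = {-1, 0} by decide, sum_pair (by norm_num), hneg, hpos, hm1, h0, htop]
  ring

/-- The elements of `Y_n`, with `k` the length of the positive run of the window of `w⁻¹`. -/
structure IsTwoRun (n : ℕ) (w : Equiv.Perm ℤ) (k : ℤ) : Prop where
  mem : InXn n w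
  one_le : 1 ≤ k
  le : k ≤ n
  pos : ∀ i, 1 ≤ i → i ≤ k → 0 < w.symm i
  neg : ∀ i, k < i → i ≤ n → w.symm i < 0
  strictMonoOn_pos : StrictMonoOn w.symm (Set.Icc 1 k)
  strictMonoOn_neg : StrictMonoOn w.symm (Set.Ioc k n)

namespace IsTwoRun

variable {n : ℕ} {w : Equiv.Perm ℤ} {k : ℤ}

lemma of_ascents (hw : InXn n w) (hk : 1 ≤ k) (hkn : k ≤ n) (hlast : k < n → w.symm n < 0)
    (hasc : ∀ j : ℤ, 1 ≤ j → j < n → j ≠ k → w.symm j < w.symm (j + 1)) : IsTwoRun n w k := by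
  have hmono_pos : StrictMonoOn w.symm (Set.Icc 1 k) :=
    strictMonoOn_of_lt_add_one Set.ordConnected_Icc fun j _ hj hj' =>
      hasc j hj.1 (by have := hj'.2; omega) (by have := hj'.2; omega)
  have hmono_neg : StrictMonoOn w.symm (Set.Ioc k n) :=
    strictMonoOn_of_lt_add_one Set.ordConnected_Ioc fun j _ hj hj' =>
      hasc j (by have := hj.1; omega) (by have := hj'.2; omega) (by have := hj.1; omega)
  refine ⟨hw, hk, hkn, fun i hi hik => ?_, fun i hki hin => ?_, hmono_pos, hmono_neg⟩
  · exact hw.2.trans_le (hmono_pos.monotoneOn ⟨le_rfl, hk⟩ ⟨hi, hik⟩ hi)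
  · exact (hmono_neg.monotoneOn ⟨hki, hin⟩ ⟨by omega, le_rfl⟩ hin).trans_lt (hlast (by omega))

lemma desBefore_eq (h : IsTwoRun n w k) {q : ℤ} (hqn : q ≤ n) :
    desBefore w.symm q = if k < q then 1 else 0 := by
  have hterm : ∀ j ∈ Icc 1 (q - 1),
      (if w.symm (j + 1) < w.symm j then (1 : ℤ) else 0) = if k = j then 1 else 0 := by
    intro j hj
    rw [mem_Icc] at hj
    rcases lt_trichotomy j k with hjk | rfl | hjk
    · have := h.strictMonoOn_pos ⟨hj.1, hjk.le⟩ ⟨by omega, hjk⟩ (lt_add_one j)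
      rw [if_neg (by omega), if_neg (by omega)]
    · have := h.pos j hj.1 le_rfl
      have := h.neg (j + 1) (by omega) (by omega)
      rw [if_pos (by omega), if_pos rfl]
    · have := h.strictMonoOn_neg ⟨hjk, by omega⟩ ⟨by omega, by omega⟩ (lt_add_one j)
      rw [if_neg (by omega), if_neg (by omega)]
  have := h.one_le
  rw [desBefore, sum_congr rfl hterm, sum_ite_eq]
  exact if_congr (by simp only [mem_Icc]; omega) rfl rfl

lemma cdes_le_two (h : IsTwoRun n w k) : cdes n w.symm ≤ 2 := by
  have hn : 1 ≤ n := by have := h.one_le; have := h.le; omega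
  have hcdes := cdes_eq hn h.mem.1.symm h.mem.2
  rw [h.desBefore_eq le_rfl] at hcdes
  have := h.neg n
  split_ifs at hcdes <;> omega

end IsTwoRun

theorem exists_isTwoRun {n : ℕ} {w : Equiv.Perm ℤ} (hn : 1 ≤ n) (hw : InXn n w)
    (hc : cdes n w.symm ≤ 2) : ∃ k, IsTwoRun n w k := by
  have hcdes := cdes_eq hn hw.1.symm hw.2
  have hc' : (cdes n w.symm : ℤ) ≤ 2 := by exact_mod_cast hc
  set D := (Icc 1 ((n : ℤ) - 1)).filter fun j => w.symm (j + 1) < w.symm j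
  have hD : desBefore w.symm n = #D := by simp only [desBefore, sum_boole, D]
  have hasc : ∀ j : ℤ, 1 ≤ j → j < n → j ∉ D → w.symm j < w.symm (j + 1) := by
    intro j hj hjn hjD
    have hne : w.symm j ≠ w.symm (j + 1) := fun he => by have := w.symm.injective he; omega
    simp only [D, mem_filter, mem_Icc, not_and, not_lt] at hjD
    exact lt_of_le_of_ne (hjD ⟨hj, by omega⟩) hne
  have hnz : w.symm n ≠ 0 := hw.1.symm.map_ne_zero (by omega)
  obtain hempty | ⟨k, hk⟩ := D.eq_empty_or_nonempty
  · exact ⟨n, .of_ascents hw (by omega) le_rfl (by omega)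
      fun j hj hjn _ => hasc j hj hjn (by simp [hempty])⟩
  · -- `cdes = 2 #D + [0 < w⁻¹ n] ≤ 2` forces `D = {k}` and `w⁻¹ n < 0`
    have hcard : #D = 1 := by
      have := card_pos.2 ⟨k, hk⟩
      split_ifs at hcdes <;> omega
    have hlast : w.symm n < 0 := by
      split_ifs at hcdes <;> omega
    have hkD : ∀ j ∈ D, j = k := fun j hj => card_le_one.1 hcard.le j hj k hk
    simp only [D, mem_filter, mem_Icc] at hk
    exact ⟨k, .of_ascents hw hk.1.1 (by omega) (fun _ => hlast)
      fun j hj hjn hjk => hasc j hj hjn fun hjD => hjk (hkD j hjD)⟩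

/-! ### A monotone statistic for `⇀` -/

lemma desBefore_congr {v v' : ℤ → ℤ} {q : ℤ}
    (h : ∀ l, 1 ≤ l → l < q → (v' (l + 1) < v' l ↔ v (l + 1) < v l)) :
    desBefore v' q = desBefore v q :=
  sum_congr rfl fun l hl => by rw [mem_Icc] at hl; exact if_congr (h l hl.1 (by omega)) rfl rfl

/-- For a signed permutation `v` with `0 < v 1` and `i, j ≥ 1`, this is one less than the number
of circular descents of the cyclic word `v (-j) ⋯ v (-1) v 1 ⋯ v i`. -/
noncomputable def arcDes (v : ℤ → ℤ) (i j : ℤ) : ℤ :=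
  desBefore v i + desBefore v j - if v i + v j < 0 then 1 else 0

section arcDes

variable {n : ℕ} {u v w : Equiv.Perm ℤ} {v' : ℤ → ℤ} {i j : ℤ}

lemma arcDes_le_of_swap_one {p : ℤ} (h : IsSignedPerm n v)
    (hv' : ∀ x, v' x = Equiv.swap 1 (-1) (v x)) (hp : v p = 1) (hp1 : 1 ≤ p)
    (hi : 1 ≤ i) (hj : 1 ≤ j) : arcDes v' i j ≤ arcDes v i j := by
  have hdes : ∀ q, desBefore v' q = desBefore v q := fun q => desBefore_congr fun l hl _ => by
    have h1 := h.map_ne_neg_map hl (show 1 ≤ l + 1 by omega)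
    have h2 : v l ≠ 0 := h.map_ne_zero (by omega)
    have h3 : v (l + 1) ≠ 0 := h.map_ne_zero (by omega)
    rw [hv', hv', Equiv.swap_apply_def, Equiv.swap_apply_def]
    split_ifs <;> omega
  have h1 := h.map_ne_neg_map hi hj
  have h2 : v i ≠ 0 := h.map_ne_zero (by omega)
  have h3 : v j ≠ 0 := h.map_ne_zero (by omega)
  have h4 := h.map_eq_iff hp i
  have h5 := h.map_eq_iff hp j
  simp only [arcDes, hdes, hv', Equiv.swap_apply_def]
  split_ifs <;> omega

lemma swap_swap_lt_swap_swap_iff {m y z : ℤ} (hm : 1 ≤ m)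
    (hyz : ¬(y = m ∧ z = m + 1) ∧ ¬(y = m + 1 ∧ z = m) ∧ ¬(y = -m ∧ z = -(m + 1)) ∧
      ¬(y = -(m + 1) ∧ z = -m)) :
    Equiv.swap (-m) (-(m + 1)) (Equiv.swap m (m + 1) y) <
      Equiv.swap (-m) (-(m + 1)) (Equiv.swap m (m + 1) z) ↔ y < z := by
  simp only [Equiv.swap_apply_def]
  split_ifs <;> omega

lemma swap_swap_add_swap_swap_neg {m y z : ℤ} (hm : 1 ≤ m) (hyz : y + z < 0)
    (hy : ¬(y = m ∧ z = -(m + 1))) (hz : ¬(y = -(m + 1) ∧ z = m)) :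
    Equiv.swap (-m) (-(m + 1)) (Equiv.swap m (m + 1) y) +
      Equiv.swap (-m) (-(m + 1)) (Equiv.swap m (m + 1) z) < 0 := by
  simp only [Equiv.swap_apply_def]
  split_ifs <;> omega

lemma arcDes_le_of_swap_pair {m a b : ℤ} (h : IsSignedPerm n v)
    (hv' : ∀ x, v' x = Equiv.swap (-m) (-(m + 1)) (Equiv.swap m (m + 1) (v x)))
    (hm : 1 ≤ m) (ha : v a = m) (hb : v b = m + 1) (hab : Lll a b)
    (hi : 1 ≤ i) (hj : 1 ≤ j) : arcDes v' i j ≤ arcDes v i j := by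
  obtain ⟨c, hc0, hac, hcb⟩ := hab
  have hloc : ∀ x, _ := fun x => And.intro (h.map_eq_iff ha x) (h.map_eq_iff hb x)
  -- the positions `a < b` of `m, m + 1` are not adjacent (nor are `-b < -a`), so `desBefore`
  -- never compares two exchanged values
  have hdes : ∀ q, desBefore v' q = desBefore v q := fun q => desBefore_congr fun l hl _ => by
    have h1 := hloc l
    have h2 := hloc (l + 1)
    rw [hv', hv']
    exact swap_swap_lt_swap_swap_iff hm (by omega)
  have h1 := hloc i
  have h2 := hloc j
  have hsum : v i + v j < 0 → v' i + v' j < 0 := fun hs => by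
    rw [hv', hv']
    exact swap_swap_add_swap_swap_neg hm hs (by omega) (by omega)
  simp only [arcDes, hdes]
  split_ifs <;> omega

lemma desBefore_of_swap_top {p q : ℤ} (h : IsSignedPerm n v)
    (hv' : ∀ x, v' x = Equiv.swap (n : ℤ) (-n) (v x)) (hp : v p = -n) (hp2 : 2 ≤ p)
    (hqn : q ≤ n) :
    desBefore v q = desBefore v' q + (if p ≤ q then 1 else 0) - if p < q then 1 else 0 := by
  have hval : ∀ x : ℤ, 1 ≤ x → x ≤ n → _ := fun x hx hxn =>
    And.intro (h.map_eq_iff hp x) (Set.mem_Icc.1 (h.map_mem_Icc ⟨by omega, hxn⟩))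
  have hterm : ∀ l ∈ Icc 1 (q - 1), (if v (l + 1) < v l then (1 : ℤ) else 0) =
      (if v' (l + 1) < v' l then 1 else 0) + (if l = p - 1 then 1 else 0) -
        if l = p then 1 else 0 := by
    intro l hl
    rw [mem_Icc] at hl
    have h1 := hval l hl.1 (by omega)
    have h2 := hval (l + 1) (by omega) (by omega)
    have h3 : v l ≠ v (l + 1) := fun he => by have := v.injective he; omega
    rw [hv', hv', Equiv.swap_apply_def, Equiv.swap_apply_def]
    split_ifs <;> omega
  rw [desBefore, sum_congr rfl hterm, sum_sub_distrib, sum_add_distrib, sum_ite_eq', sum_ite_eq',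
    ← desBefore]
  simp only [mem_Icc]
  split_ifs <;> omega

lemma arcDes_le_of_swap_top {p : ℤ} (h : IsSignedPerm n v)
    (hv' : ∀ x, v' x = Equiv.swap (n : ℤ) (-n) (v x)) (hp : v p = -n) (hp2 : 2 ≤ p)
    (hi : 1 ≤ i) (hin : i ≤ n) (hj : 1 ≤ j) (hjn : j ≤ n) : arcDes v' i j ≤ arcDes v i j := by
  have hval : ∀ x : ℤ, 1 ≤ x → x ≤ n → _ := fun x hx hxn =>
    And.intro (h.map_eq_iff hp x) (Set.mem_Icc.1 (h.map_mem_Icc ⟨by omega, hxn⟩))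
  have h1 := hval i hi hin
  have h2 := hval j hj hjn
  have h3 := h.map_ne_neg_map hi hj
  simp only [arcDes, desBefore_of_swap_top h hv' hp hp2 hin,
    desBefore_of_swap_top h hv' hp hp2 hjn, hv', Equiv.swap_apply_def]
  split_ifs <;> omega

theorem arcDes_le_of_covRel (h : covRel n u w) (hi : 1 ≤ i) (hin : i ≤ n) (hj : 1 ≤ j)
    (hjn : j ≤ n) : arcDes u.symm i j ≤ arcDes w.symm i j := by
  obtain ⟨-, hw, hcase⟩ := h
  have hv := hw.1.symm
  rcases hcase with ⟨h2, rfl⟩ | ⟨m, hm, -, hab, rfl⟩ | ⟨hn2, rfl⟩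
  · exact arcDes_le_of_swap_one hv (fun _ => rfl) (w.symm_apply_apply 1) (by omega) hi hj
  · exact arcDes_le_of_swap_pair hv (fun _ => rfl) hm (w.symm_apply_apply m)
      (w.symm_apply_apply (m + 1)) hab hi hj
  · exact arcDes_le_of_swap_top hv (fun _ => rfl) (p := -w n)
      (by rw [hv.1, w.symm_apply_apply]) (by omega) hi hin hj hjn

theorem arcDes_le_of_reflTransGen (h : Relation.ReflTransGen (covRel n) u w) (hi : 1 ≤ i)
    (hin : i ≤ n) (hj : 1 ≤ j) (hjn : j ≤ n) : arcDes u.symm i j ≤ arcDes w.symm i j := by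
  induction h with
  | refl => exact le_rfl
  | tail _ hcov ih => exact ih.trans (arcDes_le_of_covRel hcov hi hin hj hjn)

end arcDes

namespace IsTwoRun

variable {n : ℕ} {w₁ w₂ : Equiv.Perm ℤ} {k₁ k₂ : ℤ}

lemma le_of_arcDes_le (h₁ : IsTwoRun n w₁ k₁) (h₂ : IsTwoRun n w₂ k₂)
    (harc : arcDes w₁.symm (k₁ + 1) (k₁ + 1) ≤ arcDes w₂.symm (k₁ + 1) (k₁ + 1)) : k₂ ≤ k₁ := by
  by_contra! hlt
  have := h₁.one_le
  have := h₂.le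
  have hneg := h₁.neg (k₁ + 1) (by omega) (by omega)
  have hpos := h₂.pos (k₁ + 1) (by omega) (by omega)
  simp only [arcDes, h₁.desBefore_eq (show k₁ + 1 ≤ n by omega),
    h₂.desBefore_eq (show k₁ + 1 ≤ n by omega)] at harc
  split_ifs at harc <;> omega

/-- The entries of absolute value below `w₁⁻¹ i` sit at positions `< i` or `> k₁`; comparing
`arcDes` at `(i, j)` for `j > k₁` moves all of them below `w₂⁻¹ i` in absolute value. -/
lemma symm_le_of_arcDes_le (h₁ : IsTwoRun n w₁ k₁) (h₂ : IsTwoRun n w₂ k₂) (hk : k₂ ≤ k₁)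
    {i : ℤ} (hi : 1 ≤ i) (hik : i ≤ k₂)
    (harc : ∀ j, k₁ < j → j ≤ n → arcDes w₁.symm i j ≤ arcDes w₂.symm i j) :
    w₁.symm i ≤ w₂.symm i := by
  by_contra! hlt
  have hs₁ := h₁.mem.1.symm
  have hs₂ := h₂.mem.1.symm
  have hkn := h₁.le
  have ha' := h₂.pos i hi hik
  have han := (Set.mem_Icc.1 (hs₁.map_mem_Icc (i := i) ⟨by omega, by omega⟩)).2
  have hsub : (Icc 1 (n : ℤ)).filter (fun x => -w₁.symm i < w₁.symm x ∧ w₁.symm x < w₁.symm i) ⊆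
      (Icc 1 (n : ℤ)).filter (fun x => -w₂.symm i < w₂.symm x ∧ w₂.symm x < w₂.symm i) := by
    intro x hx
    simp only [mem_filter, mem_Icc] at hx ⊢
    obtain ⟨⟨hx1, hxn⟩, hxa⟩ := hx
    refine ⟨⟨hx1, hxn⟩, ?_⟩
    rcases lt_or_ge x i with hxi | hxi
    · have := h₂.strictMonoOn_pos ⟨hx1, by omega⟩ ⟨hi, hik⟩ hxi
      have := h₂.pos x hx1 (by omega)
      omega
    rcases le_or_gt x k₁ with hxk | hxk
    · have := h₁.strictMonoOn_pos.monotoneOn ⟨hi, by omega⟩ ⟨by omega, hxk⟩ hxi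
      omega
    have hx := harc x hxk hxn
    have := h₁.neg x hxk hxn
    have := h₂.neg x (by omega) hxn
    have := hs₂.map_ne_neg_map hi hx1
    simp only [arcDes, h₁.desBefore_eq hxn, h₂.desBefore_eq hxn,
      h₁.desBefore_eq (show i ≤ n by omega), h₂.desBefore_eq (show i ≤ n by omega)] at hx
    split_ifs at hx <;> omega
  have hcard := card_le_card hsub
  have hc₁ := hs₁.card_filter_abs_lt (a := w₁.symm i) (by omega) (by omega)
  have hc₂ := hs₂.card_filter_abs_lt (a := w₂.symm i) (by omega) (by omega)
  omega

theorem le_of_reflTransGen (h₁ : IsTwoRun n w₁ k₁) (h₂ : IsTwoRun n w₂ k₂)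
    (h : Relation.ReflTransGen (covRel n) w₁ w₂) :
    k₂ ≤ k₁ ∧ ∀ i, 1 ≤ i → i ≤ k₂ → w₁.symm i ≤ w₂.symm i := by
  have := h₁.one_le
  have := h₂.le
  have hk : k₂ ≤ k₁ := by
    rcases lt_or_ge k₁ n with hkn | hkn
    · exact h₁.le_of_arcDes_le h₂ (arcDes_le_of_reflTransGen h (by omega) (by omega)
        (by omega) (by omega))
    · omega
  exact ⟨hk, fun i hi hik => h₁.symm_le_of_arcDes_le h₂ hk hi hik fun j hkj hjn =>
    arcDes_le_of_reflTransGen h hi (by omega) (by omega) hjn⟩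

end IsTwoRun

/-! ### Chains between elements of `Y_n` -/

section steps

variable {n : ℕ} {w : Equiv.Perm ℤ} {k : ℤ}

lemma isSignedPerm_swap_mul_swap {m : ℤ} (hm : 1 ≤ m) (hmn : m + 1 ≤ n) :
    IsSignedPerm n (Equiv.swap m (m + 1) * Equiv.swap (-m) (-(m + 1))) := by
  refine ⟨fun x => ?_, fun x hx => ?_⟩
  · simp only [Equiv.Perm.mul_apply, Equiv.swap_apply_def]
    split_ifs <;> omega
  · rw [lt_abs] at hx
    simp only [Equiv.Perm.mul_apply, Equiv.swap_apply_def]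
    split_ifs <;> omega

lemma swap_mul_swap_mul_self (m : ℤ) (hm : 1 ≤ m) :
    Equiv.swap m (m + 1) * Equiv.swap (-m) (-(m + 1)) *
      (Equiv.swap m (m + 1) * Equiv.swap (-m) (-(m + 1))) = 1 := by
  ext x
  simp only [Equiv.Perm.mul_apply, Equiv.Perm.one_apply, Equiv.swap_apply_def]
  split_ifs <;> omega

lemma isSignedPerm_swap_neg {a : ℤ} (ha : 1 ≤ a) (han : a ≤ n) :
    IsSignedPerm n (Equiv.swap a (-a)) := by
  refine ⟨fun x => ?_, fun x hx => ?_⟩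
  · simp only [Equiv.swap_apply_def]
    split_ifs <;> omega
  · rw [lt_abs] at hx
    simp only [Equiv.swap_apply_def]
    split_ifs <;> omega

lemma covRel_mul_swap_mul_swap {m : ℤ} (hw : InXn n w)
    (hw' : InXn n (w * (Equiv.swap m (m + 1) * Equiv.swap (-m) (-(m + 1)))))
    (hm : 1 ≤ m) (hmn : m + 1 ≤ n) (h : Lll (w (m + 1)) (w m)) :
    covRel n w (w * (Equiv.swap m (m + 1) * Equiv.swap (-m) (-(m + 1)))) := by
  refine ⟨hw, hw', Or.inr (Or.inl ⟨m, hm, by omega, ?_, ?_⟩)⟩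
  · simp only [Equiv.Perm.mul_apply, Equiv.swap_apply_def]
    convert h using 2 <;> split_ifs <;> omega
  · rw [mul_assoc, swap_mul_swap_mul_self m hm, mul_one]

lemma covRel_mul_swap_neg (hw : InXn n w) (hw' : InXn n (w * Equiv.swap (n : ℤ) (-n)))
    (h : 2 ≤ w n) : covRel n w (w * Equiv.swap (n : ℤ) (-n)) := by
  refine ⟨hw, hw', Or.inr (Or.inr ⟨?_, by rw [mul_assoc, Equiv.swap_mul_self, mul_one]⟩)⟩
  rw [Equiv.Perm.mul_apply, Equiv.swap_apply_left, hw.1.1]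
  omega

end steps

namespace IsTwoRun

variable {n : ℕ} {w w₁ w₂ : Equiv.Perm ℤ} {k k₁ k₂ : ℤ}

lemma exists_symm_eq_neg (h : IsTwoRun n w k) {c : ℤ} (hc : 1 ≤ c) (hcn : c ≤ n)
    (hfree : ∀ l, 1 ≤ l → l ≤ k → w.symm l ≠ c) : ∃ j, k < j ∧ j ≤ n ∧ w.symm j = -c := by
  have hsp := h.mem.1
  have hp0 : w c ≠ 0 := hsp.map_ne_zero (by omega)
  have hpb := Set.mem_Icc.1 (hsp.map_mem_Icc (i := c) ⟨by omega, hcn⟩)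
  have hwp : w.symm (w c) = c := w.symm_apply_apply _
  refine ⟨-w c, ?_, by omega, by rw [hsp.symm.1, hwp]⟩
  rcases lt_or_gt_of_ne hp0 with hneg | hpos
  · by_contra! hle
    have := h.pos (-w c) (by omega) hle
    rw [hsp.symm.1, hwp] at this
    omega
  · rcases le_or_gt (w c) k with hle | hgt
    · exact absurd hwp (hfree _ (by omega) hle)
    · have := h.neg _ hgt (by omega)
      omega

lemma of_raise {w' : Equiv.Perm ℤ} (h : IsTwoRun n w k) (hw' : IsSignedPerm n w') {i j : ℤ}
    (hi : 1 ≤ i) (hik : i ≤ k) (hkj : k < j) (hjn : j ≤ n)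
    (hfree : ∀ l, 1 ≤ l → l ≤ k → w.symm l ≠ w.symm i + 1) (hj : w.symm j = -(w.symm i + 1))
    (hval : ∀ x : ℤ, 1 ≤ x → x ≤ n →
      w'.symm x = if x = i then w.symm i + 1 else if x = j then -w.symm i else w.symm x) :
    IsTwoRun n w' k := by
  have hs := h.mem.1.symm
  have hm := h.pos i hi hik
  have hkn := h.le
  have hpos : ∀ x : ℤ, 1 ≤ x → x ≤ k → 0 < w'.symm x := fun x hx hxk => by
    have := h.pos x hx hxk
    rw [hval x hx (by omega)]
    split_ifs <;> omega
  refine ⟨⟨hw', hpos 1 le_rfl h.one_le⟩, h.one_le, hkn, hpos, fun x hkx hxn => ?_,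
    fun x hx y hy hxy => ?_, fun x hx y hy hxy => ?_⟩
  · have := h.neg x hkx hxn
    rw [hval x (by omega) hxn]
    split_ifs <;> omega
  · have hx' := Set.mem_Icc.1 hx
    have hy' := Set.mem_Icc.1 hy
    have := h.strictMonoOn_pos hx hy hxy
    have := hfree y hy.1 hy.2
    have : i < y → w.symm i < w.symm y := h.strictMonoOn_pos ⟨hi, hik⟩ hy
    have : x < i → w.symm x < w.symm i := (h.strictMonoOn_pos hx ⟨hi, hik⟩ ·)
    rw [hval x hx.1 (by omega), hval y hy.1 (by omega)]
    split_ifs <;> omega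
  · have hx' := Set.mem_Ioc.1 hx
    have hy' := Set.mem_Ioc.1 hy
    have := h.strictMonoOn_neg hx hy hxy
    have : j < y → w.symm j < w.symm y := h.strictMonoOn_neg ⟨hkj, hjn⟩ hy
    have : x < j → w.symm x < w.symm j := (h.strictMonoOn_neg hx ⟨hkj, hjn⟩ ·)
    have := hs.map_eq_iff rfl (p := i) y
    rw [hval x (by omega) hx'.2, hval y (by omega) hy'.2]
    split_ifs <;> omega

/-- The value `m + 1` sits in the negative run, so exchanging it with `m = w⁻¹ i` is a step of
type (ii). -/
lemma exists_covRel_raise (h : IsTwoRun n w k) {i : ℤ} (hi : 1 ≤ i) (hik : i ≤ k)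
    (hmn : w.symm i + 1 ≤ n) (hfree : ∀ l, 1 ≤ l → l ≤ k → w.symm l ≠ w.symm i + 1) :
    ∃ w', covRel n w w' ∧ IsTwoRun n w' k ∧ w'.symm i = w.symm i + 1 ∧
      ∀ l, 1 ≤ l → l ≤ k → l ≠ i → w'.symm l = w.symm l := by
  set m := w.symm i with hm_def
  have hs := h.mem.1.symm
  have hm : 1 ≤ m := h.pos i hi hik
  have hkn := h.le
  obtain ⟨j, hkj, hjn, hj⟩ := h.exists_symm_eq_neg (c := m + 1) (by omega) hmn hfree
  set w' := w * (Equiv.swap m (m + 1) * Equiv.swap (-m) (-(m + 1)))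
  have hval : ∀ x : ℤ, 1 ≤ x → x ≤ n →
      w'.symm x = if x = i then m + 1 else if x = j then -m else w.symm x := by
    intro x hx hxn
    have h1 := hs.map_eq_iff hm_def.symm x
    have h2 := hs.map_eq_iff hj x
    have h3 := Set.mem_Icc.1 (hs.map_mem_Icc (i := x) ⟨by omega, hxn⟩)
    show Equiv.swap (-m) (-(m + 1)) (Equiv.swap m (m + 1) (w.symm x)) = _
    simp only [Equiv.swap_apply_def]
    split_ifs <;> omega
  have hrun : IsTwoRun n w' k := h.of_raise (h.mem.1.mul (isSignedPerm_swap_mul_swap hm hmn))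
    hi hik hkj hjn hfree hj hval
  have hwj : w (m + 1) = -j := by
    rw [← neg_neg (m + 1), h.mem.1.1, ← hj, Equiv.apply_symm_apply]
  have hwi : w m = i := by rw [hm_def, Equiv.apply_symm_apply]
  refine ⟨w', covRel_mul_swap_mul_swap h.mem hrun.mem hm hmn ⟨-1, by omega, by omega, by omega⟩,
    hrun, by rw [hval i hi (by omega), if_pos rfl], fun l hl hlk hli => ?_⟩
  rw [hval l hl (by omega), if_neg hli, if_neg (by omega)]

lemma exists_covRel_flip (h : IsTwoRun n w k) (hk : 2 ≤ k) (htop : w.symm k = n) :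
    ∃ w', covRel n w w' ∧ IsTwoRun n w' (k - 1) ∧
      ∀ l, 1 ≤ l → l ≤ k - 1 → w'.symm l = w.symm l := by
  have hsp := h.mem.1
  have hs := hsp.symm
  have hkn := h.le
  set t := Equiv.swap (n : ℤ) (-n)
  have hval : ∀ x : ℤ, 1 ≤ x → x ≤ n → (w * t).symm x = if x = k then -(n : ℤ) else w.symm x := by
    intro x hx hxn
    have h1 := hs.map_eq_iff htop x
    have h2 := Set.mem_Icc.1 (hs.map_mem_Icc (i := x) ⟨by omega, hxn⟩)
    show t (w.symm x) = _
    simp only [t, Equiv.swap_apply_def]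
    split_ifs <;> omega
  have hrun : IsTwoRun n (w * t) (k - 1) := by
    refine ⟨⟨hsp.mul (isSignedPerm_swap_neg (by omega) le_rfl), ?_⟩, by omega, by omega,
      fun x hx hxk => ?_, fun x hkx hxn => ?_, fun x hx y hy hxy => ?_, fun x hx y hy hxy => ?_⟩
    · rw [hval 1 le_rfl (by omega), if_neg (by omega)]
      exact h.mem.2
    · rw [hval x hx (by omega), if_neg (by omega)]
      exact h.pos x hx (by omega)
    · rw [hval x (by omega) hxn]
      split_ifs
      · omega
      · exact h.neg x (by omega) hxn
    · have hx' := Set.mem_Icc.1 hx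
      have hy' := Set.mem_Icc.1 hy
      rw [hval x (by omega) (by omega), hval y (by omega) (by omega), if_neg (by omega),
        if_neg (by omega)]
      exact h.strictMonoOn_pos ⟨hx'.1, by omega⟩ ⟨hy'.1, by omega⟩ hxy
    · have hx' := Set.mem_Ioc.1 hx
      have hy' := Set.mem_Ioc.1 hy
      have : k < x → w.symm x < w.symm y := fun hkx =>
        h.strictMonoOn_neg ⟨hkx, hx'.2⟩ ⟨by omega, hy'.2⟩ hxy
      have := hs.map_eq_iff htop y
      have := Set.mem_Icc.1 (hs.map_mem_Icc (i := y) ⟨by omega, hy'.2⟩)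
      rw [hval x (by omega) hx'.2, hval y (by omega) hy'.2]
      split_ifs <;> omega
  have hwn : w n = k := (w.symm_apply_eq.1 htop).symm
  exact ⟨w * t, covRel_mul_swap_neg h.mem hrun.mem (by omega), hrun,
    fun l hl hlk => by rw [hval l hl (by omega), if_neg (by omega)]⟩

/-- If `w₁⁻¹ x < w₂⁻¹ x`, the value `w₂⁻¹ x` has no possible position in the window of `w₁⁻¹`. -/
lemma symm_le_of_eq_of_eq (h₁ : IsTwoRun n w₁ k) (h₂ : IsTwoRun n w₂ k)
    (hpre : ∀ i, 1 ≤ i → i ≤ k → w₁.symm i = w₂.symm i) {x : ℤ} (hkx : k < x) (hxn : x ≤ n)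
    (hafter : ∀ y, x < y → y ≤ n → w₁.symm y = w₂.symm y) : w₂.symm x ≤ w₁.symm x := by
  by_contra! hlt
  have := h₁.one_le
  have hsp := h₁.mem.1
  have hs₂ := h₂.mem.1.symm
  set c := w₂.symm x
  have hc := h₂.neg x hkx hxn
  have hcb := Set.mem_Icc.1 (hs₂.map_mem_Icc (i := x) ⟨by omega, hxn⟩)
  set p := w₁ c
  have hp : w₁.symm p = c := w₁.symm_apply_apply c
  have hpb := Set.mem_Icc.1 (hsp.map_mem_Icc (i := c) ⟨hcb.1, by omega⟩)
  have hp0 : p ≠ 0 := hsp.map_ne_zero (by omega)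
  rcases lt_or_gt_of_ne hp0 with hneg | hpos
  · have hnp : w₁.symm (-p) = -c := by rw [h₁.mem.1.symm.1, hp]
    have hpk : -p ≤ k := by
      by_contra! hkp
      have := h₁.neg (-p) hkp (by omega)
      omega
    have h₂p : w₂.symm (-p) = -c := by rw [← hpre (-p) (by omega) hpk, hnp]
    have := hs₂.eq_neg_of_map_eq_neg (i := x) (j := -p) (by rw [h₂p, neg_neg])
    omega
  · rcases le_or_gt p k with hpk | hkp
    · have := h₁.pos p (by omega) hpk
      omega
    rcases lt_trichotomy p x with hpx | hpx | hxp
    · have := h₁.strictMonoOn_neg ⟨hkp, by omega⟩ ⟨hkx, hxn⟩ hpx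
      omega
    · rw [hpx] at hp
      omega
    · have := w₂.symm.injective ((hafter p hxp (by omega)).symm.trans hp)
      omega

lemma eq_of_symm_eq (h₁ : IsTwoRun n w₁ k) (h₂ : IsTwoRun n w₂ k)
    (hpre : ∀ i, 1 ≤ i → i ≤ k → w₁.symm i = w₂.symm i) : w₁ = w₂ := by
  have hpre' : ∀ i, 1 ≤ i → i ≤ k → w₂.symm i = w₁.symm i := fun i hi hik => (hpre i hi hik).symm
  suffices hs : w₁.symm = w₂.symm by simpa using congrArg Equiv.symm hs
  refine h₁.mem.1.symm.ext_of_window h₂.mem.1.symm fun x hx hxn => ?_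
  rcases le_or_gt x k with hxk | hkx
  · exact hpre x hx hxk
  by_contra hne
  obtain ⟨y, hy, hmax⟩ := exists_max_image ((Ioc k (n : ℤ)).filter fun y => w₁.symm y ≠ w₂.symm y)
    id ⟨x, by simp [hkx, hxn, hne]⟩
  simp only [mem_filter, mem_Ioc, id] at hy hmax
  have hafter : ∀ z, y < z → z ≤ n → w₁.symm z = w₂.symm z := fun z hyz hzn => by
    by_contra hz
    have := hmax z ⟨⟨by omega, hzn⟩, hz⟩
    omega
  exact hy.2 (le_antisymm (h₂.symm_le_of_eq_of_eq h₁ hpre' hy.1.1 hy.1.2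
    fun z hyz hzn => (hafter z hyz hzn).symm) (h₁.symm_le_of_eq_of_eq h₂ hpre hy.1.1 hy.1.2 hafter))

/-- Take the last position where `w₁⁻¹` is still below `w₂⁻¹`: the value just above
`w₁⁻¹ i` is not used by the positive run of `w₁⁻¹`. -/
lemma exists_raisable_index (h₁ : IsTwoRun n w₁ k) (h₂ : IsTwoRun n w₂ k)
    (hle : ∀ i, 1 ≤ i → i ≤ k → w₁.symm i ≤ w₂.symm i) {j : ℤ} (hj : 1 ≤ j) (hjk : j ≤ k)
    (hlt : w₁.symm j < w₂.symm j) :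
    ∃ i, 1 ≤ i ∧ i ≤ k ∧ w₁.symm i < w₂.symm i ∧
      ∀ l, 1 ≤ l → l ≤ k → w₁.symm l ≠ w₁.symm i + 1 := by
  obtain ⟨i, hi, hmax⟩ := exists_max_image ((Icc 1 k).filter fun i => w₁.symm i < w₂.symm i) id
    ⟨j, by simp only [mem_filter, mem_Icc]; exact ⟨⟨hj, hjk⟩, hlt⟩⟩
  simp only [mem_filter, mem_Icc, id] at hi hmax
  refine ⟨i, hi.1.1, hi.1.2, hi.2, fun l hl hlk => ?_⟩
  rcases lt_trichotomy l i with hli | rfl | hil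
  · have := h₁.strictMonoOn_pos ⟨hl, hlk⟩ ⟨hi.1.1, hi.1.2⟩ hli
    omega
  · omega
  · have := h₂.strictMonoOn_pos ⟨hi.1.1, hi.1.2⟩ ⟨hl, hlk⟩ hil
    have := hle l hl hlk
    have : ¬w₁.symm l < w₂.symm l := fun hl' => by have := hmax l ⟨⟨hl, hlk⟩, hl'⟩; omega
    omega

theorem reflTransGen_of_le_of_eq (h₁ : IsTwoRun n w₁ k) (h₂ : IsTwoRun n w₂ k)
    (hle : ∀ i, 1 ≤ i → i ≤ k → w₁.symm i ≤ w₂.symm i) :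
    Relation.ReflTransGen (covRel n) w₁ w₂ := by
  obtain ⟨d, hd⟩ : ∃ d : ℕ, ∑ i ∈ Icc 1 k, (w₂.symm i - w₁.symm i) = d :=
    ⟨_, (Int.toNat_of_nonneg (sum_nonneg fun i hi => by
      rw [mem_Icc] at hi; linarith [hle i hi.1 hi.2])).symm⟩
  induction d generalizing w₁ with
  | zero =>
    have heq := (sum_eq_zero_iff_of_nonneg (s := Icc 1 k)
      (f := fun i => w₂.symm i - w₁.symm i) fun i hi => by
      rw [mem_Icc] at hi; linarith [hle i hi.1 hi.2]).1 (by rw [hd, Nat.cast_zero])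
    rw [h₁.eq_of_symm_eq h₂ fun i hi hik => by have := heq i (mem_Icc.2 ⟨hi, hik⟩); omega]
  | succ d ih =>
    obtain ⟨j, hj, hj_lt⟩ := exists_lt_of_sum_lt (f := 0) (s := Icc 1 k)
      (g := fun i => w₂.symm i - w₁.symm i)
      (by simp only [Pi.zero_apply, sum_const_zero, hd]; omega)
    simp only [mem_Icc, Pi.zero_apply] at hj hj_lt
    obtain ⟨i, hi, hik, hlt, hfree⟩ := exists_raisable_index h₁ h₂ hle hj.1 hj.2 (by omega)
    have hmn := Set.mem_Icc.1 (h₂.mem.1.symm.map_mem_Icc (i := i) ⟨by omega, by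
      have := h₂.le; omega⟩)
    obtain ⟨w', hcov, h', hi', hrest⟩ := h₁.exists_covRel_raise hi hik (by omega) hfree
    refine .head hcov (ih h' (fun l hl hlk => ?_) ?_)
    · rcases eq_or_ne l i with rfl | hli
      · omega
      · rw [hrest l hl hlk hli]
        exact hle l hl hlk
    · have hterm : ∀ l ∈ Icc 1 k, w₂.symm l - w'.symm l =
          (w₂.symm l - w₁.symm l) - if l = i then 1 else 0 := fun l hl => by
        rw [mem_Icc] at hl
        split_ifs with hli
        · rw [hli, hi']
          ring
        · rw [hrest l hl.1 hl.2 hli]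
          ring
      rw [sum_congr rfl hterm, sum_sub_distrib, sum_ite_eq', if_pos (mem_Icc.2 ⟨hi, hik⟩), hd]
      push_cast
      ring

lemma exists_reflTransGen_symm_eq_top (h : IsTwoRun n w k) :
    ∃ w', Relation.ReflTransGen (covRel n) w w' ∧ IsTwoRun n w' k ∧ w'.symm k = n ∧
      ∀ l, 1 ≤ l → l < k → w'.symm l = w.symm l := by
  obtain ⟨d, hd⟩ : ∃ d : ℕ, (n : ℤ) - w.symm k = d := ⟨_, (Int.toNat_of_nonneg (by
    have := Set.mem_Icc.1 (h.mem.1.symm.map_mem_Icc (i := k) ⟨by have := h.one_le; omega, h.le⟩)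
    omega)).symm⟩
  induction d generalizing w with
  | zero => exact ⟨w, .refl, h, by omega, fun _ _ _ => rfl⟩
  | succ d ih =>
    have hk := h.one_le
    obtain ⟨w', hcov, h', hk', hrest⟩ := h.exists_covRel_raise hk le_rfl (by omega)
      fun l hl hlk => by
        rcases hlk.lt_or_eq with hlk | rfl
        · have := h.strictMonoOn_pos ⟨hl, hlk.le⟩ ⟨hk, le_rfl⟩ hlk
          omega
        · omega
    obtain ⟨w'', hw'', h'', htop, hrest'⟩ := ih h' (by rw [hk']; push_cast at hd ⊢; omega)
    exact ⟨w'', .head hcov hw'', h'', htop, fun l hl hlk => by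
      rw [hrest' l hl hlk, hrest l hl hlk.le hlk.ne]⟩

theorem reflTransGen_of_le (h₁ : IsTwoRun n w₁ k₁) (h₂ : IsTwoRun n w₂ k₂) (hk : k₂ ≤ k₁)
    (hle : ∀ i, 1 ≤ i → i ≤ k₂ → w₁.symm i ≤ w₂.symm i) :
    Relation.ReflTransGen (covRel n) w₁ w₂ := by
  obtain ⟨d, hd⟩ : ∃ d : ℕ, k₁ - k₂ = d := ⟨_, (Int.toNat_of_nonneg (by omega)).symm⟩
  induction d generalizing w₁ k₁ with
  | zero =>
    obtain rfl : k₁ = k₂ := by omega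
    exact h₁.reflTransGen_of_le_of_eq h₂ hle
  | succ d ih =>
    have := h₂.one_le
    obtain ⟨w', hw', h', htop, hpre'⟩ := h₁.exists_reflTransGen_symm_eq_top
    obtain ⟨w'', hcov, h'', hpre''⟩ := h'.exists_covRel_flip (by omega) htop
    refine hw'.trans (.head hcov (ih h'' (by omega) (fun i hi hik => ?_) (by omega)))
    rw [hpre'' i hi (by omega), hpre' i hi (by omega)]
    exact hle i hi hik

theorem reflTransGen_iff (h₁ : IsTwoRun n w₁ k₁) (h₂ : IsTwoRun n w₂ k₂) :
    Relation.ReflTransGen (covRel n) w₁ w₂ ↔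
      k₂ ≤ k₁ ∧ ∀ i, 1 ≤ i → i ≤ k₂ → w₁.symm i ≤ w₂.symm i :=
  ⟨h₁.le_of_reflTransGen h₂, fun ⟨hk, hle⟩ => h₁.reflTransGen_of_le h₂ hk hle⟩

end IsTwoRun

/-! ### The map `τ_n` -/

def shiftOut (x : ℤ) : ℤ := if 0 < x then x + 1 else x - 1

def shiftIn (x : ℤ) : ℤ := if 0 < x then x - 1 else x + 1

lemma shiftOut_neg {x : ℤ} (hx : x ≠ 0) : shiftOut (-x) = -shiftOut x := by
  unfold shiftOut
  split_ifs <;> omega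

lemma shiftIn_neg {x : ℤ} (hx : x ≠ 0) : shiftIn (-x) = -shiftIn x := by
  unfold shiftIn
  split_ifs <;> omega

def shiftAway : {x : ℤ // x ≠ 0} ≃ {x : ℤ // 1 < |x|} where
  toFun x := ⟨shiftOut x, by have := x.2; rw [lt_abs]; unfold shiftOut; split_ifs <;> omega⟩
  invFun y := ⟨shiftIn y, by have := lt_abs.1 y.2; unfold shiftIn; split_ifs <;> omega⟩
  left_inv x := Subtype.ext (by have := x.2; simp only [shiftIn, shiftOut]; split_ifs <;> omega)
  right_inv y := Subtype.ext (by
    have := lt_abs.1 y.2; simp only [shiftIn, shiftOut]; split_ifs <;> omega)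

section tau

variable {n : ℕ} {w u u₁ u₂ : Equiv.Perm ℤ}

theorem exists_isTau (h : IsSignedPerm n w) : ∃ u, IsSignedPerm (n + 1) u ∧ isTau n w u := by
  have hw0 : ∀ x, w x ≠ 0 ↔ x ≠ 0 := fun x =>
    ⟨fun hx h0 => hx (h0 ▸ h.map_zero), h.map_ne_zero⟩
  have hu : ∀ x, (w.subtypePerm hw0).extendDomain shiftAway x =
      if 1 < |x| then shiftOut (w (shiftIn x)) else x := fun x => by
    by_cases hx : 1 < |x|
    · rw [Equiv.Perm.extendDomain_apply_subtype (p := fun y : ℤ => 1 < |y|) _ _ hx, if_pos hx]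
      rfl
    · rw [Equiv.Perm.extendDomain_apply_not_subtype (p := fun y : ℤ => 1 < |y|) _ _ hx, if_neg hx]
  refine ⟨(w.subtypePerm hw0).extendDomain shiftAway, ⟨fun x => ?_, fun x hx => ?_⟩,
    by simp [hu], fun i hi hin => ?_⟩
  · rw [hu, hu, abs_neg]
    by_cases hx : 1 < |x|
    · have hx' := lt_abs.1 hx
      have hin : shiftIn x ≠ 0 := by unfold shiftIn; split_ifs <;> omega
      rw [if_pos hx, if_pos hx, shiftIn_neg (by omega), h.1, shiftOut_neg (h.map_ne_zero hin)]
    · rw [if_neg hx, if_neg hx]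
  · have hx' := lt_abs.1 hx
    rw [hu, if_pos (by rw [lt_abs]; omega),
      h.2 _ (by rw [lt_abs]; unfold shiftIn; split_ifs <;> omega)]
    unfold shiftIn shiftOut
    split_ifs <;> omega
  · rw [hu, if_pos (by rw [lt_abs]; omega)]
    simp only [shiftIn, if_pos (show 0 < i + 1 by omega), add_sub_cancel_right]
    rfl

lemma isTau_unique (h₁ : IsSignedPerm (n + 1) u₁) (h₂ : IsSignedPerm (n + 1) u₂)
    (ht₁ : isTau n w u₁) (ht₂ : isTau n w u₂) : u₁ = u₂ :=
  h₁.ext_of_window h₂ fun x hx hxn => by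
    rcases hx.eq_or_lt with rfl | hx
    · rw [ht₁.1, ht₂.1]
    · have := ht₁.2 (x - 1) (by omega) (by omega)
      have := ht₂.2 (x - 1) (by omega) (by omega)
      simp_all

lemma isTau.symm_apply (h : IsSignedPerm n w) (hu : IsSignedPerm (n + 1) u) (ht : isTau n w u)
    {m : ℤ} (hm : 1 ≤ m) (hmn : m ≤ n) : u.symm (m + 1) = shiftOut (w.symm m) := by
  have hs := h.symm
  have hb := Set.mem_Icc.1 (hs.map_mem_Icc (i := m) ⟨by omega, hmn⟩)
  have h0 : w.symm m ≠ 0 := hs.map_ne_zero (by omega)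
  rw [Equiv.symm_apply_eq]
  rcases lt_or_gt_of_ne h0 with hneg | hpos
  · have e := ht.2 (-w.symm m) (by omega) (by omega)
    rw [h.1, w.apply_symm_apply, if_neg (by omega)] at e
    have e' := hu.1 (-w.symm m + 1)
    rw [e, show -(-w.symm m + 1) = w.symm m - 1 by ring] at e'
    simp only [shiftOut, if_neg (not_lt.2 hneg.le), e']
    ring
  · have e := ht.2 (w.symm m) (by omega) (by omega)
    rw [w.apply_symm_apply, if_pos (by omega)] at e
    simp only [shiftOut, if_pos hpos, e]

lemma isTau.symm_one (ht : isTau n w u) : u.symm 1 = 1 := by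
  rw [Equiv.symm_apply_eq, ht.1]

end tau

namespace IsTwoRun

variable {n : ℕ} {w w₁ w₂ u u₁ u₂ : Equiv.Perm ℤ} {k k₁ k₂ : ℤ}

lemma symm_apply_of_isTau (h : IsTwoRun n w k) (hu : IsSignedPerm (n + 1) u) (ht : isTau n w u)
    {x : ℤ} (hx : 2 ≤ x) (hxn : x ≤ n + 1) :
    u.symm x = if x ≤ k + 1 then w.symm (x - 1) + 1 else w.symm (x - 1) - 1 := by
  have := isTau.symm_apply h.mem.1 hu ht (m := x - 1) (by omega) (by omega)
  rw [sub_add_cancel] at this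
  rw [this, shiftOut]
  by_cases hxk : x ≤ k + 1
  · rw [if_pos (h.pos (x - 1) (by omega) (by omega)), if_pos hxk]
  · rw [if_neg (not_lt.2 (h.neg (x - 1) (by omega) (by omega)).le), if_neg hxk]

lemma tau (h : IsTwoRun n w k) (hu : IsSignedPerm (n + 1) u) (ht : isTau n w u) :
    IsTwoRun (n + 1) u (k + 1) := by
  have := h.one_le
  have := h.le
  have hval : ∀ x : ℤ, 2 ≤ x → x ≤ n + 1 → u.symm x = _ := fun x hx hxn =>
    h.symm_apply_of_isTau hu ht hx hxn
  have hpos' : ∀ x : ℤ, 1 ≤ x → x ≤ k + 1 → 0 < u.symm x := fun x hx hxk => by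
    rcases hx.eq_or_lt with rfl | hx
    · rw [ht.symm_one]
      norm_num
    · have := h.pos (x - 1) (by omega) (by omega)
      rw [hval x hx (by omega), if_pos hxk]
      omega
  refine ⟨⟨hu, hpos' 1 le_rfl (by omega)⟩, by omega, by push_cast; omega, hpos',
    fun x hkx hxn => ?_, fun x ⟨hx, hxk⟩ y ⟨hy, hyk⟩ hxy => ?_,
    fun x ⟨hkx, hxn⟩ y ⟨hky, hyn⟩ hxy => ?_⟩
  · push_cast at hxn
    have := h.neg (x - 1) (by omega) (by omega)
    rw [hval x (by omega) hxn, if_neg (by omega)]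
    omega
  · have := h.pos (y - 1) (by omega) (by omega)
    rw [hval y (by omega) (by omega), if_pos hyk]
    rcases hx.eq_or_lt with rfl | hx
    · rw [ht.symm_one]
      omega
    · have := h.strictMonoOn_pos ⟨by omega, by omega⟩ ⟨by omega, by omega⟩
        (show x - 1 < y - 1 by omega)
      rw [hval x hx (by omega), if_pos hxk]
      omega
  · push_cast at hxn hyn
    have := h.strictMonoOn_neg ⟨by omega, by omega⟩ ⟨by omega, by omega⟩
      (show x - 1 < y - 1 by omega)
    rw [hval x (by omega) hxn, hval y (by omega) hyn, if_neg (by omega), if_neg (by omega)]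
    omega

theorem reflTransGen_iff_of_isTau (h₁ : IsTwoRun n w₁ k₁) (h₂ : IsTwoRun n w₂ k₂)
    (hu₁ : IsSignedPerm (n + 1) u₁) (ht₁ : isTau n w₁ u₁)
    (hu₂ : IsSignedPerm (n + 1) u₂) (ht₂ : isTau n w₂ u₂) :
    Relation.ReflTransGen (covRel n) w₁ w₂ ↔ Relation.ReflTransGen (covRel (n + 1)) u₁ u₂ := by
  rw [h₁.reflTransGen_iff h₂, (h₁.tau hu₁ ht₁).reflTransGen_iff (h₂.tau hu₂ ht₂)]
  have := h₂.le
  constructor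
  · rintro ⟨hk, hle⟩
    refine ⟨by omega, fun i hi hik => ?_⟩
    rcases hi.eq_or_lt with rfl | hi
    · rw [ht₁.symm_one, ht₂.symm_one]
    · rw [h₁.symm_apply_of_isTau hu₁ ht₁ hi (by omega),
        h₂.symm_apply_of_isTau hu₂ ht₂ hi (by omega), if_pos (by omega), if_pos hik]
      have := hle (i - 1) (by omega) (by omega)
      omega
  · rintro ⟨hk, hle⟩
    refine ⟨by omega, fun i hi hik => ?_⟩
    have := hle (i + 1) (by omega) (by omega)
    rw [h₁.symm_apply_of_isTau hu₁ ht₁ (by omega) (by omega),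
      h₂.symm_apply_of_isTau hu₂ ht₂ (by omega) (by omega), if_pos (by omega), if_pos (by omega),
      add_sub_cancel_right] at this
    omega

end IsTwoRun

/-- Let `Y_n = {w ∈ X_n : cdes(w⁻¹) ≤ 2}` and let `τ_n(w) ∈ 𝔅_{n+1}`
be the signed permutation with window `1 w'_1 ⋯ w'_n`, where `w'_i` shifts `w_i` away
from `0` by one. Then `τ_n(w)` exists and is unique, `τ_n(Y_n) ⊆ Y_{n+1}`, and `τ_n` is
a poset embedding: `u ≤ w` in `X_n` iff `τ_n(u) ≤ τ_n(w)` in `X_{n+1}`. -/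
theorem tau_poset_embedding (n : ℕ) (hn : 1 ≤ n) :
    (∀ w : Equiv.Perm ℤ, InXn n w → cdes n w.symm ≤ 2 →
      ∃! u : Equiv.Perm ℤ, IsSignedPerm (n + 1) u ∧ isTau n w u) ∧
    (∀ w u : Equiv.Perm ℤ, InXn n w → cdes n w.symm ≤ 2 →
      IsSignedPerm (n + 1) u → isTau n w u →
      InXn (n + 1) u ∧ cdes (n + 1) u.symm ≤ 2) ∧
    (∀ w₁ u₁ w₂ u₂ : Equiv.Perm ℤ,
      InXn n w₁ → cdes n w₁.symm ≤ 2 → InXn n w₂ → cdes n w₂.symm ≤ 2 →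
      IsSignedPerm (n + 1) u₁ → isTau n w₁ u₁ →
      IsSignedPerm (n + 1) u₂ → isTau n w₂ u₂ →
      (Relation.ReflTransGen (covRel n) w₁ w₂ ↔
        Relation.ReflTransGen (covRel (n + 1)) u₁ u₂)) := by
  refine ⟨fun w hw _ => ?_, fun w u hw hc hu ht => ?_,
    fun w₁ u₁ w₂ u₂ hw₁ hc₁ hw₂ hc₂ hu₁ ht₁ hu₂ ht₂ => ?_⟩
  · obtain ⟨u, hu⟩ := exists_isTau hw.1
    exact ⟨u, hu, fun u' hu' => isTau_unique hu'.1 hu.1 hu'.2 hu.2⟩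
  · obtain ⟨k, hk⟩ := exists_isTwoRun hn hw hc
    have hku := hk.tau hu ht
    exact ⟨hku.mem, hku.cdes_le_two⟩
  · obtain ⟨k₁, hk₁⟩ := exists_isTwoRun hn hw₁ hc₁
    obtain ⟨k₂, hk₂⟩ := exists_isTwoRun hn hw₂ hc₂
    exact hk₁.reflTransGen_iff_of_isTau hk₂ hu₁ ht₁ hu₂ ht₂
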